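/- arXiv:2001.07894 — 2 statements merged into one kernel-verified Lean document; each statement's English description precedes it below -/
import Mathlib

section
/- For every n-vertex tree T and every integer k ≥ 0, n_k(S_n) ≥ n_k(T) ≥ n_k(P_n), i.e. the star maximizes and the path minimizes the number of k-vertex subtrees among trees of a fixed order. -/
open SimpleGraph

/-- A subtree of `G` is a nonempty connected acyclic subgraph of `G`. -/
def IsSubtree {V : Type*} {G : SimpleGraph V} (H : G.Subgraph) : Prop :=
  H.Connected ∧ H.coe.IsAcyclic

/-- `nk G k` : the number of subtrees of `G` with exactly `k` vertices. -/
noncomputable def nk {V : Type*} (G : SimpleGraph V) (k : ℕ) : ℕ :=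
  Nat.card {H : G.Subgraph // IsSubtree H ∧ H.verts.ncard = k}

/-- number of `k`-vertex subtrees of `G` containing the vertex `v`. -/
noncomputable def nkAt {V : Type*} (G : SimpleGraph V) (v : V) (k : ℕ) : ℕ :=
  Nat.card {H : G.Subgraph // IsSubtree H ∧ v ∈ H.verts ∧ H.verts.ncard = k}

/-- `nT G` : total number of subtrees of `G`, counting the empty subtree once. -/
noncomputable def nT {V : Type*} (G : SimpleGraph V) : ℕ :=
  1 + Nat.card {H : G.Subgraph // IsSubtree H}

/-- number of subtrees of `G` containing the vertex `v`. -/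
noncomputable def nAt {V : Type*} (G : SimpleGraph V) (v : V) : ℕ :=
  Nat.card {H : G.Subgraph // IsSubtree H ∧ v ∈ H.verts}

/-- the path on `n` vertices `0 - 1 - ⋯ - (n-1)`. -/
def pathG (n : ℕ) : SimpleGraph (Fin n) :=
  SimpleGraph.fromRel (fun u v => v.val = u.val + 1)

/-- the cycle on `n` vertices. -/
def cycG (n : ℕ) : SimpleGraph (Fin n) :=
  SimpleGraph.fromRel (fun u v => v.val = u.val + 1 ∨ (u.val = 0 ∧ v.val + 1 = n))

/-- the star on `n` vertices with center `0`. -/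
def starG (n : ℕ) : SimpleGraph (Fin n) :=
  SimpleGraph.fromRel (fun u _ => u.val = 0)

/-- `USnl n l` : the cycle `C_l` (on `0,…,l-1`) with `n - l` pendant vertices attached
to the vertex `0`. -/
def USnl (n l : ℕ) : SimpleGraph (Fin n) :=
  SimpleGraph.fromRel (fun u v =>
    (v.val = u.val + 1 ∧ v.val < l) ∨ (u.val = 0 ∧ v.val + 1 = l) ∨ (u.val = 0 ∧ l ≤ v.val))

/-- `UPnl n l` : the cycle `C_l` (on `0,…,l-1`) with a pendant path of length `n - l`
attached to the vertex `l-1`. -/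
def UPnl (n l : ℕ) : SimpleGraph (Fin n) :=
  SimpleGraph.fromRel (fun u v => v.val = u.val + 1 ∨ (u.val = 0 ∧ v.val + 1 = l))

/-- `US_n` : the star `S_n` together with an edge joining two of its leaves. -/
def USn (n : ℕ) : SimpleGraph (Fin n) := USnl n 3

/-- `UP_n` : a triangle with a pendant path, obtained by identifying a vertex of `C_3`
with an end of `P_{n-2}`. -/
def UPn (n : ℕ) : SimpleGraph (Fin n) := UPnl n 3

/-- the Merrifield–Simmons index: the number of independent vertex subsets
(including the empty set). -/
noncomputable def sigmaG {V : Type*} (G : SimpleGraph V) : ℕ :=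
  Nat.card {s : Set V // ∀ u ∈ s, ∀ v ∈ s, ¬ G.Adj u v}

/-- the Hosoya index: the number of matchings (including the empty one). -/
noncomputable def hosoya {V : Type*} (G : SimpleGraph V) : ℕ :=
  Nat.card {s : Set (Sym2 V) // s ⊆ G.edgeSet ∧
    s.Pairwise (fun e f => ∀ v, ¬(v ∈ e ∧ v ∈ f))}

/-- the Wiener index: the sum of the distances over all unordered pairs of vertices. -/
noncomputable def wiener {V : Type*} [Fintype V] (G : SimpleGraph V) : ℕ :=
  (∑ u : V, ∑ v : V, G.dist u v) / 2

/-!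
Subtrees of an acyclic graph are exactly the subgraphs induced on connected vertex sets, so
`n_k` counts connected `k`-sets. In the path these are the `n + 1 - k` windows of `k`
consecutive vertices. A connected graph on `P` has at least `|P| + 1 - k` of them: grow a
connected set `Q` of size `|P| - 1` inside `P`, count inside `Q` by induction, and add one
connected `k`-set through the vertex missed by `Q`. For `k ≥ 2` a subtree is determined by its
`k - 1` edges, so `n_k(T) ≤ C(n - 1, k - 1)` for a tree `T`; the star attains this bound, since
its centre together with any `k - 1` leaves spans a subtree.
-/

namespace SimpleGraph

variable {V : Type*} {G : SimpleGraph V}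

lemma IsAcyclic.induce_verts_eq {H : G.Subgraph} (hG : G.IsAcyclic) (hH : H.Connected) :
    (⊤ : G.Subgraph).induce H.verts = H := by
  refine Subgraph.ext rfl ?_
  ext u v
  simp only [Subgraph.induce_adj, Subgraph.top_adj]
  refine ⟨fun ⟨hu, hv, huv⟩ => ?_,
    fun h => ⟨H.edge_vert h, H.edge_vert h.symm, H.adj_sub h⟩⟩
  obtain ⟨p, hp⟩ := (H.connected_iff_forall_exists_walk_subgraph.mp hH).2 hu hv
  have hbridge := isAcyclic_iff_forall_adj_isBridge.mp hG huv
  exact Subgraph.edgeSet_mono hp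
    (p.mem_edges_toSubgraph.mpr (isBridge_iff_forall_walk_mem_edges.mp hbridge p))

lemma connected_induce_coe_singleton (v : V) :
    (G.induce (({v} : Finset V) : Set V)).Connected := by
  rw [Finset.coe_singleton, induce_singleton_eq_top]
  exact connected_top

lemma Connected.induce_insert {s : Set V} {x y : V} (hs : (G.induce s).Connected) (hy : y ∈ s)
    (hxy : G.Adj y x) : (G.induce (insert x s)).Connected := by
  rw [Set.insert_eq, Set.union_comm]
  exact connected_induce_union hs.preconnected Preconnected.of_subsingleton hy rfl hxy

open Classical in
noncomputable def connectedSubsets (G : SimpleGraph V) (P : Finset V) (k : ℕ) :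
    Finset (Finset V) :=
  (P.powersetCard k).filter fun s => (G.induce (s : Set V)).Connected

lemma mem_connectedSubsets {P s : Finset V} {k : ℕ} :
    s ∈ G.connectedSubsets P k ↔
      s ⊆ P ∧ s.card = k ∧ (G.induce (s : Set V)).Connected := by
  simp [connectedSubsets, and_assoc]

lemma connectedSubsets_mono {P Q : Finset V} (hQP : Q ⊆ P) (k : ℕ) :
    G.connectedSubsets Q k ⊆ G.connectedSubsets P k := fun s hs => by
  rw [mem_connectedSubsets] at hs ⊢
  exact ⟨hs.1.trans hQP, hs.2⟩

lemma card_connectedSubsets_one (P : Finset V) : (G.connectedSubsets P 1).card = P.card := by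
  classical
  have : G.connectedSubsets P 1 = P.powersetCard 1 := by
    refine Finset.filter_true_of_mem fun s hs => ?_
    obtain ⟨v, rfl⟩ := Finset.card_eq_one.mp (Finset.mem_powersetCard.mp hs).2
    exact connected_induce_coe_singleton v
  rw [this, Finset.card_powersetCard, Nat.choose_one_right]

lemma IsAcyclic.nk_eq_card_connectedSubsets [Fintype V] (hG : G.IsAcyclic) (k : ℕ) :
    nk G k = (G.connectedSubsets Finset.univ k).card := by
  classical
  rw [nk, ← Fintype.card_coe, ← Nat.card_eq_fintype_card]
  refine Nat.card_congr
    { toFun := fun H => ⟨H.1.verts.toFinset, mem_connectedSubsets.mpr ⟨Finset.subset_univ _,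
          by rw [← Set.ncard_eq_toFinset_card', H.2.2],
          by rw [Set.coe_toFinset]; exact H.2.1.1.induce_verts⟩⟩
      invFun := fun s => ⟨(⊤ : G.Subgraph).induce s,
        ⟨connected_induce_iff.mp (mem_connectedSubsets.mp s.2).2.2, hG.subgraph _⟩,
        by simpa using (mem_connectedSubsets.mp s.2).2.1⟩
      left_inv := fun H => Subtype.ext <| by simpa using hG.induce_verts_eq H.2.1.1
      right_inv := fun s => Subtype.ext <| by simp }

lemma exists_connected_subset_card {P s : Finset V} {j : ℕ}
    (hP : (G.induce (P : Set V)).Connected) (hsP : s ⊆ P) (hs : (G.induce (s : Set V)).Connected)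
    (hsj : s.card ≤ j) (hjP : j ≤ P.card) :
    ∃ t, s ⊆ t ∧ t ⊆ P ∧ (G.induce (t : Set V)).Connected ∧ t.card = j := by
  classical
  induction j, hsj using Nat.le_induction with
  | base => exact ⟨s, subset_rfl, hsP, hs, rfl⟩
  | succ j hsj ih =>
    obtain ⟨t, hst, htP, ht, rfl⟩ := ih (by omega)
    obtain ⟨z, hzP, hzt⟩ :=
      Finset.exists_mem_notMem_of_card_lt_card (by omega : t.card < P.card)
    obtain ⟨⟨y, hy⟩⟩ := hs.nonempty
    obtain ⟨p⟩ := hP.preconnected ⟨y, hsP hy⟩ ⟨z, hzP⟩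
    obtain ⟨d, -, hd₁, hd₂⟩ := p.exists_boundary_dart {x | x.1 ∈ t} (hst hy) hzt
    refine ⟨insert d.snd.1 t, hst.trans (Finset.subset_insert _ _),
      Finset.insert_subset d.snd.2 htP, ?_, Finset.card_insert_of_notMem hd₂⟩
    rw [Finset.coe_insert]
    exact ht.induce_insert hd₁ d.adj

lemma card_add_one_sub_le_card_connectedSubsets {P : Finset V} {k : ℕ}
    (hP : (G.induce (P : Set V)).Connected) (hk : 1 ≤ k) :
    P.card + 1 - k ≤ (G.connectedSubsets P k).card := by
  classical
  induction P using Finset.strongInduction with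
  | H P ih =>
    rcases le_or_gt P.card k with hPk | hkP
    · rcases hPk.lt_or_eq with hPk | rfl
      · omega
      · simpa using Finset.card_pos.mpr ⟨P, mem_connectedSubsets.mpr ⟨subset_rfl, rfl, hP⟩⟩
    obtain ⟨y, hy⟩ : P.Nonempty := Finset.card_pos.mp (by omega)
    obtain ⟨Q, -, hQP, hQ, hQcard⟩ := exists_connected_subset_card hP
      (Finset.singleton_subset_iff.mpr hy) (connected_induce_coe_singleton y)
      (by simp; omega) (Nat.sub_le P.card 1)
    obtain ⟨x, hxP, hxQ⟩ :=
      Finset.exists_mem_notMem_of_card_lt_card (by omega : Q.card < P.card)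
    obtain ⟨t, hxt, htP, ht, htcard⟩ := exists_connected_subset_card hP
      (Finset.singleton_subset_iff.mpr hxP) (connected_induce_coe_singleton x)
      (by simp; omega) hkP.le
    have ht_new : t ∉ G.connectedSubsets Q k := fun h =>
      hxQ ((mem_connectedSubsets.mp h).1 (hxt (Finset.mem_singleton_self x)))
    have hsub : insert t (G.connectedSubsets Q k) ⊆ G.connectedSubsets P k :=
      Finset.insert_subset (mem_connectedSubsets.mpr ⟨htP, htcard, ht⟩)
        (connectedSubsets_mono hQP k)
    have hQ_lower := ih Q (Finset.ssubset_iff_subset_ne.mpr ⟨hQP, by rintro rfl; omega⟩) hQ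
    have := Finset.card_le_card hsub
    rw [Finset.card_insert_of_notMem ht_new] at this
    omega

lemma nk_zero [Finite V] (G : SimpleGraph V) : nk G 0 = 0 := by
  refine Nat.card_eq_zero.mpr (Or.inl ⟨fun ⟨H, hH, hcard⟩ => ?_⟩)
  exact (Set.ncard_pos (Set.toFinite _)).mpr hH.1.nonempty |>.ne' hcard

lemma IsAcyclic.nk_one [Fintype V] (hG : G.IsAcyclic) : nk G 1 = Nat.card V := by
  rw [hG.nk_eq_card_connectedSubsets, card_connectedSubsets_one, Finset.card_univ,
    Nat.card_eq_fintype_card]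

lemma IsTree.card_add_one_sub_le_nk [Fintype V] (hG : G.IsTree) {k : ℕ} (hk : 1 ≤ k) :
    Nat.card V + 1 - k ≤ nk G k := by
  rw [hG.isAcyclic.nk_eq_card_connectedSubsets, Nat.card_eq_fintype_card, ← Finset.card_univ]
  refine card_add_one_sub_le_card_connectedSubsets ?_ hk
  rw [Finset.coe_univ]
  exact (induceUnivIso G).connected_iff.mpr hG.connected

lemma Subgraph.Connected.verts_eq_support {H : G.Subgraph} (hH : H.Connected)
    (hnt : H.verts.Nontrivial) : H.verts = H.support := by
  refine H.support_subset_verts.antisymm' fun v hv => ?_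
  obtain ⟨u, hu, huv⟩ := hnt.exists_ne v
  obtain ⟨p⟩ := hH.preconnected ⟨v, hv⟩ ⟨u, hu⟩
  cases p with
  | nil => exact absurd rfl huv
  | cons h _ => exact ⟨_, h⟩

lemma _root_.IsSubtree.ncard_edgeSet_add_one [Finite V] {H : G.Subgraph} (hH : IsSubtree H) :
    H.edgeSet.ncard + 1 = H.verts.ncard := by
  have := (isTree_iff_connected_and_card.mp ⟨hH.1, hH.2⟩).2
  rwa [← H.image_coe_edgeSet_coe,
    Set.ncard_image_of_injective _ (Sym2.map.injective Subtype.val_injective),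
    ← Nat.card_coe_set_eq, ← Nat.card_coe_set_eq]

lemma nk_le_choose_card_edgeSet [Fintype V] {k : ℕ} (hk : 2 ≤ k) :
    nk G k ≤ (Nat.card G.edgeSet).choose (k - 1) := by
  classical
  have hE : ∀ H : G.Subgraph, IsSubtree H → H.verts.ncard = k →
      H.edgeSet.toFinset ∈ G.edgeFinset.powersetCard (k - 1) := fun H hH hcard => by
    rw [Finset.mem_powersetCard, Set.toFinset_card, ← Nat.card_eq_fintype_card,
      Nat.card_coe_set_eq]
    refine ⟨fun e he => ?_, by have := hH.ncard_edgeSet_add_one; omega⟩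
    simpa using H.edgeSet_subset (Set.mem_toFinset.mp he)
  have hinj : Function.Injective fun H : {H : G.Subgraph // IsSubtree H ∧ H.verts.ncard = k} =>
      (⟨_, hE H.1 H.2.1 H.2.2⟩ : G.edgeFinset.powersetCard (k - 1)) := by
    rintro ⟨H, hH, hcard⟩ ⟨K, hK, hKcard⟩ h
    have hEq : H.edgeSet = K.edgeSet := by simpa using congrArg Subtype.val h
    have hAdj : H.Adj = K.Adj := by
      ext u v
      exact Set.ext_iff.mp hEq s(u, v)
    have hnt : ∀ {L : G.Subgraph}, L.verts.ncard = k → L.verts.Nontrivial := fun hL =>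
      Set.one_lt_ncard_iff_nontrivial.mp (by omega)
    refine Subtype.ext (Subgraph.ext ?_ hAdj)
    rw [hH.1.verts_eq_support (hnt hcard), hK.1.verts_eq_support (hnt hKcard)]
    ext v
    simp [Subgraph.mem_support, hAdj]
  have := Nat.card_le_card_of_injective _ hinj
  rwa [Nat.card_eq_finsetCard, Finset.card_powersetCard, edgeFinset_card,
    ← Nat.card_eq_fintype_card] at this

lemma IsTree.nk_le_choose [Fintype V] (hG : G.IsTree) {k : ℕ} (hk : 2 ≤ k) :
    nk G k ≤ (Nat.card V - 1).choose (k - 1) := by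
  have hcard := (isTree_iff_connected_and_card.mp hG).2
  rw [show Nat.card V - 1 = Nat.card G.edgeSet by omega]
  exact nk_le_choose_card_edgeSet hk

lemma choose_le_nk_starGraph [Fintype V] (r : V) {k : ℕ} (hk : 1 ≤ k) :
    (Nat.card V - 1).choose (k - 1) ≤ nk (starGraph r) k := by
  classical
  rw [(isAcyclic_starGraph r).nk_eq_card_connectedSubsets, Nat.card_eq_fintype_card,
    ← Finset.card_univ, ← Finset.card_erase_of_mem (Finset.mem_univ r),
    ← Finset.card_powersetCard]
  have hr : ∀ t ∈ (Finset.univ.erase r).powersetCard (k - 1), r ∉ t := fun t ht hrt => by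
    simpa using (Finset.mem_powersetCard.mp ht).1 hrt
  refine Finset.card_le_card_of_injOn (insert r) (fun t ht => ?_) fun t ht t' ht' h => ?_
  · refine mem_connectedSubsets.mpr ⟨Finset.subset_univ _, ?_, ?_⟩
    · rw [Finset.card_insert_of_notMem (hr t ht), (Finset.mem_powersetCard.mp ht).2]
      omega
    · rw [connected_iff_exists_forall_reachable]
      refine ⟨⟨r, by simp⟩, fun ⟨w, hw⟩ => ?_⟩
      rcases eq_or_ne r w with rfl | hrw
      · rfl
      · exact Adj.reachable (by simpa using hrw)
  · rw [← Finset.erase_insert (hr t ht), ← Finset.erase_insert (hr t' ht'), h]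

lemma starG_eq_starGraph {n : ℕ} (hn : 0 < n) : starG n = starGraph ⟨0, hn⟩ := by
  ext u v
  simp only [starG, fromRel_adj, starGraph_adj, Fin.ext_iff]

lemma pathG_adj {n : ℕ} {u v : Fin n} :
    (pathG n).Adj u v ↔ v.val = u.val + 1 ∨ u.val = v.val + 1 := by
  simp only [pathG, fromRel_adj, ne_eq, Fin.ext_iff]
  omega

lemma pathG_exists_crossing_dart {n : ℕ} {u v : Fin n} (p : (pathG n).Walk u v) {c : ℕ}
    (hu : u.val ≤ c) (hv : c < v.val) :
    ∃ d ∈ p.darts, d.fst.val = c ∧ d.snd.val = c + 1 := by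
  obtain ⟨d, hd, h₁, h₂⟩ := p.exists_boundary_dart {x | x.val ≤ c} hu (by simpa using hv)
  simp only [Set.mem_ofPred_eq, not_le] at h₁ h₂
  have := pathG_adj.mp d.adj
  exact ⟨d, hd, by omega, by omega⟩

lemma pathG_isAcyclic (n : ℕ) : (pathG n).IsAcyclic := by
  have hbridge : ∀ {u v : Fin n}, v.val = u.val + 1 → (pathG n).IsBridge s(u, v) :=
    fun {u v} huv => isBridge_iff_forall_walk_mem_edges.mpr fun p => by
      obtain ⟨d, hd, h₁, h₂⟩ := pathG_exists_crossing_dart p le_rfl (by omega)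
      have hd_edge : d.edge = s(u, v) := by
        rw [Dart.edge, Sym2.mk, Fin.ext h₁, Fin.ext (h₂.trans huv.symm)]
      exact hd_edge ▸ List.mem_map_of_mem hd
  refine isAcyclic_iff_forall_adj_isBridge.mpr fun u v huv => ?_
  rcases pathG_adj.mp huv with h | h
  · exact hbridge h
  · rw [Sym2.eq_swap]
    exact hbridge h

lemma pathG_mem_of_preconnected {n : ℕ} {s : Set (Fin n)}
    (hs : ((pathG n).induce s).Preconnected) {a b c : Fin n} (ha : a ∈ s) (hb : b ∈ s)
    (hac : a ≤ c) (hcb : c ≤ b) : c ∈ s := by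
  rcases hcb.lt_or_eq with hcb | rfl
  · obtain ⟨p⟩ := hs ⟨a, ha⟩ ⟨b, hb⟩
    obtain ⟨d, hd, h₁, -⟩ := pathG_exists_crossing_dart (p.map (Embedding.induce s).toHom) hac hcb
    have := (p.map _).dart_fst_mem_support_of_mem_darts hd
    rw [Walk.support_map] at this
    obtain ⟨x, -, hx⟩ := List.mem_map.mp this
    rw [← Fin.ext h₁, ← hx]
    exact x.2
  · exact hb

lemma connectedSubsets_pathG_subset (n k : ℕ) :
    (pathG n).connectedSubsets Finset.univ k ⊆ (Finset.range (n + 1 - k)).image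
      fun m => Finset.univ.filter fun x : Fin n => m ≤ x.val ∧ x.val < m + k := by
  intro s hs
  obtain ⟨-, hcard, hconn⟩ := mem_connectedSubsets.mp hs
  obtain ⟨⟨v, hv⟩⟩ := hconn.nonempty
  have hne : s.Nonempty := ⟨v, hv⟩
  have hIcc : s = Finset.Icc (s.min' hne) (s.max' hne) := by
    ext x
    refine ⟨fun hx => Finset.mem_Icc.mpr ⟨s.min'_le x hx, s.le_max' x hx⟩, fun hx => ?_⟩
    obtain ⟨h₁, h₂⟩ := Finset.mem_Icc.mp hx
    exact pathG_mem_of_preconnected hconn.preconnected (s.min'_mem hne) (s.max'_mem hne) h₁ h₂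
  have hk := hcard
  rw [hIcc, Fin.card_Icc] at hk
  have hle := (s.max' hne).isLt
  refine Finset.mem_image.mpr ⟨(s.min' hne).val, Finset.mem_range.mpr (by omega), ?_⟩
  refine (Finset.ext fun x => ?_).trans hIcc.symm
  simp only [Finset.mem_filter, Finset.mem_univ, true_and, Finset.mem_Icc, Fin.le_def]
  omega

lemma nk_pathG_le (n k : ℕ) : nk (pathG n) k ≤ n + 1 - k := by
  rw [(pathG_isAcyclic n).nk_eq_card_connectedSubsets]
  refine (Finset.card_le_card (connectedSubsets_pathG_subset n k)).trans ?_
  exact Finset.card_image_le.trans (Finset.card_range _).le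

end SimpleGraph

/-- among `n`-vertex trees, the star maximizes and the path minimizes the
number of `k`-vertex subtrees: `n_k(S_n) ≥ n_k(T) ≥ n_k(P_n)` for every `k ≥ 0`. -/
theorem nk_tree_extremal (n : ℕ) (T : SimpleGraph (Fin n)) (hT : T.IsTree) (k : ℕ) :
    nk (pathG n) k ≤ nk T k ∧ nk T k ≤ nk (starG n) k := by
  have hn : 0 < n := Fin.pos_iff_nonempty.mpr hT.connected.nonempty
  rw [starG_eq_starGraph hn]
  obtain rfl | hk := Nat.eq_zero_or_pos k
  · simp [nk_zero]
  have hT_lower := hT.card_add_one_sub_le_nk hk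
  rw [Nat.card_fin] at hT_lower
  refine ⟨(nk_pathG_le n k).trans hT_lower, ?_⟩
  obtain rfl | hk := (show 1 ≤ k from hk).eq_or_lt
  · rw [hT.isAcyclic.nk_one, (isAcyclic_starGraph _).nk_one]
  · exact (hT.nk_le_choose hk).trans (choose_le_nk_starGraph _ hk.le)
end

section
/- The Wiener index of the graph H_1 = U_{4,4}(1;1) equals 118, which is strictly less than 120, the Wiener index of U_1(4,4,1,1). Hence the graph maximizing the number of subtrees among unicyclic graphs with segment sequence (4,4,1,1) does not minimize the Wiener index. -/
open SimpleGraph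

/-- `H₁ = U_{4,4}(1;1)` : the cycle `C_8` (on `0,…,7`) with a pendant vertex `8`
attached to `0` and a pendant vertex `9` attached to the antipodal vertex `4`. -/
def H₁ : SimpleGraph (Fin 10) :=
  SimpleGraph.fromRel (fun u v =>
    (v.val = u.val + 1 ∧ v.val ≤ 7) ∨ (u.val = 0 ∧ v.val = 7) ∨
    (u.val = 0 ∧ v.val = 8) ∨ (u.val = 4 ∧ v.val = 9))

/-- `U_1(4,4,1,1)` : the cycle `C_4` (on `0,…,3`) with a pendant path of length `4`
(`0-4-5-6-7`) and two pendant vertices `8`, `9`, all attached at the vertex `0`. -/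
def U₁4411 : SimpleGraph (Fin 10) :=
  SimpleGraph.fromRel (fun u v =>
    (v.val = u.val + 1 ∧ v.val ≤ 3) ∨ (u.val = 0 ∧ v.val = 3) ∨
    (u.val = 0 ∧ v.val = 4) ∨ (v.val = u.val + 1 ∧ 5 ≤ v.val ∧ v.val ≤ 7) ∨
    (u.val = 0 ∧ (v.val = 8 ∨ v.val = 9)))

/-! Distances in a finite graph are computable by breadth-first search: the ball of radius `k + 1`
is the ball of radius `k` together with its neighbours, and `d(c, v)` is the number of radii `k`
whose ball misses `v`. Both graphs have diameter 6, so balls of radius 6 suffice, and the two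
Wiener indices are then evaluated by `decide`. -/

open Finset

namespace SimpleGraph

variable {V : Type*} {G : SimpleGraph V}

theorem exists_walk_length_le_iff_edist_le {u v : V} {k : ℕ} :
    (∃ p : G.Walk u v, p.length ≤ k) ↔ G.edist u v ≤ k := by
  constructor
  · rintro ⟨p, hp⟩
    exact (edist_le p).trans (by exact_mod_cast hp)
  · intro h
    have hr : G.Reachable u v :=
      reachable_of_edist_ne_top (ne_top_of_le_ne_top (ENat.natCast_ne_top k) h)
    obtain ⟨p, hp⟩ := hr.exists_walk_length_eq_edist
    exact ⟨p, by exact_mod_cast hp.trans_le h⟩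

variable [Fintype V] [DecidableEq V] (G) [DecidableRel G.Adj]

def bfsBall (c : V) : ℕ → Finset V
  | 0 => {c}
  | k + 1 => (bfsBall c k).biUnion fun w => insert w (G.neighborFinset w)

def bfsDist (n : ℕ) (c v : V) : ℕ :=
  #{k ∈ range n | v ∉ G.bfsBall c k}

variable {G}

theorem mem_bfsBall_iff_exists_walk {c v : V} {k : ℕ} :
    v ∈ G.bfsBall c k ↔ ∃ p : G.Walk v c, p.length ≤ k := by
  induction k generalizing v with
  | zero =>
    rw [bfsBall, mem_singleton]
    constructor
    · rintro rfl
      exact ⟨.nil, le_rfl⟩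
    · rintro ⟨p, hp⟩
      exact p.eq_of_length_eq_zero (Nat.le_zero.mp hp)
  | succ k ih =>
    simp only [bfsBall, mem_biUnion, mem_insert, mem_neighborFinset]
    constructor
    · rintro ⟨w, hw, rfl | hwv⟩
      · obtain ⟨p, hp⟩ := ih.mp hw
        exact ⟨p, by omega⟩
      · obtain ⟨p, hp⟩ := ih.mp hw
        exact ⟨.cons hwv.symm p, by simpa using hp⟩
    · rintro ⟨p, hp⟩
      cases p with
      | nil => exact ⟨c, ih.mpr ⟨.nil, Nat.zero_le _⟩, .inl rfl⟩
      | cons hvw q => exact ⟨_, ih.mpr ⟨q, by simpa using hp⟩, .inr hvw.symm⟩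

theorem mem_bfsBall_iff_edist_le {c v : V} {k : ℕ} :
    v ∈ G.bfsBall c k ↔ G.edist v c ≤ k :=
  mem_bfsBall_iff_exists_walk.trans exists_walk_length_le_iff_edist_le

theorem dist_eq_bfsDist {n : ℕ} {c v : V} (h : v ∈ G.bfsBall c n) :
    G.dist c v = G.bfsDist n c v := by
  have hr : G.Reachable v c :=
    reachable_of_edist_ne_top <|
      ne_top_of_le_ne_top (ENat.natCast_ne_top n) (mem_bfsBall_iff_edist_le.mp h)
  have hball : ∀ k, v ∈ G.bfsBall c k ↔ G.dist c v ≤ k := fun k => by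
    rw [mem_bfsBall_iff_edist_le, dist_comm, ← hr.coe_dist_eq_edist, Nat.cast_le]
  have hn : G.dist c v ≤ n := (hball n).mp h
  rw [bfsDist, filter_congr fun k _ => (hball k).not]
  suffices {k ∈ range n | ¬G.dist c v ≤ k} = range (G.dist c v) by rw [this, card_range]
  ext k
  simp only [mem_filter, mem_range, not_le]
  omega

theorem wiener_eq_sum_bfsDist {n : ℕ} (h : ∀ c v, v ∈ G.bfsBall c n) :
    wiener G = (∑ c, ∑ v, G.bfsDist n c v) / 2 := by
  simp only [wiener, dist_eq_bfsDist (h _ _)]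

end SimpleGraph

instance : DecidableRel H₁.Adj := inferInstanceAs (DecidableRel (fromRel _).Adj)

instance : DecidableRel U₁4411.Adj := inferInstanceAs (DecidableRel (fromRel _).Adj)

/-- `W(H₁) = 118 < 120 = W(U_1(4,4,1,1))`. -/
theorem wiener_counterexample :
    wiener H₁ = 118 ∧ wiener U₁4411 = 120 ∧ wiener H₁ < wiener U₁4411 := by
  have hH : wiener H₁ = 118 := by
    rw [wiener_eq_sum_bfsDist (n := 6) (by decide)]
    decide
  have hU : wiener U₁4411 = 120 := by
    rw [wiener_eq_sum_bfsDist (n := 6) (by decide)]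
    decide
  exact ⟨hH, hU, by omega⟩
end
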